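/- arXiv:2605.02530 — 9 statements merged into one kernel-verified Lean document; each statement's English description precedes it below -/
import Mathlib

section
/- Let a ∈ ℂ with a ≠ 1 and a ≠ −1. Then the quotient ℂ-vector space V = (L × L)/range(T) has dimension exactly 3 over ℂ, with basis given by the classes ω₀ = [X⁻¹·u], ω₁ = [X⁻¹], ω₂ = [1]. -/
open LaurentPolynomial

/-- The linear map `T(f,g) = (p * D g + w * g, D f)` on `L × L`, encoding the distinguished
derivation of the superelliptic algebra (even part `L`, odd part `L * u`), where `p = P`
and `w` is the odd-weight term `u * u' = P'/2`. -/
noncomputable def Tgen (p w : LaurentPolynomial ℂ)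
    (D : LaurentPolynomial ℂ →ₗ[ℂ] LaurentPolynomial ℂ) :
    (LaurentPolynomial ℂ × LaurentPolynomial ℂ) →ₗ[ℂ]
      (LaurentPolynomial ℂ × LaurentPolynomial ℂ) where
  toFun fg := (p * D fg.2 + w * fg.2, D fg.1)
  map_add' x y := by
    ext
    · simp only [Prod.fst_add, Prod.snd_add, map_add]
      ring_nf
    · simp [Prod.snd_add]
  map_smul' c x := by
    ext
    · simp only [Prod.smul_fst, Prod.smul_snd, map_smul, smul_add, mul_smul_comm,
        RingHom.id_apply]
    · simp

/-- The derivation map for the quadratic curve: `P = X^2 - 2aX + 1`, `P'/2 = X - a`. -/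
noncomputable def Tquad (a : ℂ)
    (D : LaurentPolynomial ℂ →ₗ[ℂ] LaurentPolynomial ℂ) :
    (LaurentPolynomial ℂ × LaurentPolynomial ℂ) →ₗ[ℂ]
      (LaurentPolynomial ℂ × LaurentPolynomial ℂ) :=
  Tgen (T 2 - 2 * C a * T 1 + 1) (T 1 - C a) D

/-!
The range of `T` is `E(L) × D(L)` with `E g = P g' + (X - a) g`. Since
`E(Xⁿ) = (n + 1) Xⁿ⁺¹ - a (2n + 1) Xⁿ + n Xⁿ⁻¹`, Legendre's three-term recurrence, every `Xⁿ`
reduces modulo `E(L)` to a combination of `X⁻¹` and `1` (upwards from `n = 0`, downwards from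
`n = -1`, the outer coefficients being nonzero there), while `Xⁿ = D(Xⁿ⁺¹ / (n + 1))` lies in
`D(L)` for `n ≠ -1`. Conversely the recurrence is self-dual: pairing coefficients against a
solution `c` of it kills `E(L)`. The Legendre values `Pₙ(a)` on `n ≥ 0` and their mirror images
`P₋₁₋ₙ(a)` on `n < 0` give two such functionals, and together with the residue on the odd part
they are dual to `[X⁻¹ u], [X⁻¹], [1]`.
-/

namespace Submodule

variable {R M ι : Type*} [Ring R] [AddCommGroup M] [Module R M] [DecidableEq ι]

noncomputable def quotientBasisOfBiorthogonal (W : Submodule R M) (v : ι → M)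
    (φ : M →ₗ[R] ι → R) (hW : W ≤ LinearMap.ker φ) (hφv : ∀ i, φ (v i) = Pi.single i 1)
    (hspan : span R (Set.range v) ⊔ W = ⊤) : Module.Basis ι R (M ⧸ W) :=
  .mk (v := W.mkQ ∘ v)
    (.of_comp (W.liftQ φ hW) <| by
      simpa [Function.comp_def, hφv] using Pi.linearIndependent_single_one ι R)
    (by rw [Set.range_comp, span_image, top_le_iff, map_mkQ_eq_top, sup_comm, hspan])

theorem quotientBasisOfBiorthogonal_apply (W : Submodule R M) (v : ι → M)
    (φ : M →ₗ[R] ι → R) (hW : W ≤ LinearMap.ker φ) (hφv : ∀ i, φ (v i) = Pi.single i 1)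
    (hspan : span R (Set.range v) ⊔ W = ⊤) (i : ι) :
    W.quotientBasisOfBiorthogonal v φ hW hφv hspan i = W.mkQ (v i) :=
  Module.Basis.mk_apply ..

end Submodule

namespace LaurentPolynomial

section CommRing

variable {R : Type*} [CommRing R]

theorem linearMap_ext_T {M : Type*} [AddCommMonoid M] [Module R M]
    {f g : R[T;T⁻¹] →ₗ[R] M} (h : ∀ n, f (T n) = g (T n)) : f = g :=
  (AddMonoidAlgebra.basis ℤ R).ext h

theorem submodule_eq_top_of_T_mem {p : Submodule R R[T;T⁻¹]} (h : ∀ n, T n ∈ p) : p = ⊤ := by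
  rw [eq_top_iff, ← (AddMonoidAlgebra.basis ℤ R).span_eq, Submodule.span_le]
  rintro _ ⟨n, rfl⟩
  exact h n

noncomputable def coeffPairing (c : ℤ → R) : R[T;T⁻¹] →ₗ[R] R :=
  (AddMonoidAlgebra.basis ℤ R).constr R c

@[simp]
theorem coeffPairing_T (c : ℤ → R) (n : ℤ) : coeffPairing c (T n) = c n :=
  (AddMonoidAlgebra.basis ℤ R).constr_basis R c n

theorem coeffPairing_one (c : ℤ → R) : coeffPairing c 1 = c 0 := by
  rw [← T_zero, coeffPairing_T]

end CommRing

variable {K : Type*} [Field K]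

theorem T_mem_of_three_term [CharZero K] {p : Submodule K K[T;T⁻¹]} (b : ℤ → K)
    (hneg : T (-1) ∈ p) (hzero : T 0 ∈ p)
    (hrec : ∀ n : ℤ, ((n : K) + 1) • T (n + 1) - b n • T n + (n : K) • T (n - 1) ∈ p)
    (n : ℤ) : T n ∈ p := by
  have up : ∀ n, 0 ≤ n → T n ∈ p ∧ T (n - 1) ∈ p := by
    refine Int.leInduction ⟨hzero, hneg⟩ fun n hn ⟨hn₀, hn₁⟩ ↦ ⟨?_, by simpa using hn₀⟩
    have hne : (n : K) + 1 ≠ 0 := by exact_mod_cast (show n + 1 ≠ 0 by omega)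
    rw [← p.smul_mem_iff hne,
      show ((n : K) + 1) • T (n + 1) = (((n : K) + 1) • T (n + 1) - b n • T n
        + (n : K) • T (n - 1)) + b n • T n - (n : K) • T (n - 1) by abel]
    exact sub_mem (add_mem (hrec n) (p.smul_mem _ hn₀)) (p.smul_mem _ hn₁)
  have down : ∀ n, n ≤ -1 → T n ∈ p ∧ T (n + 1) ∈ p := by
    refine Int.leInductionDown ⟨hneg, hzero⟩ fun n hn ⟨hn₀, hn₁⟩ ↦ ⟨?_, by simpa using hn₀⟩
    have hne : (n : K) ≠ 0 := by exact_mod_cast (show n ≠ 0 by omega)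
    rw [← p.smul_mem_iff hne,
      show (n : K) • T (n - 1) = (((n : K) + 1) • T (n + 1) - b n • T n
        + (n : K) • T (n - 1)) - ((n : K) + 1) • T (n + 1) + b n • T n by abel]
    exact add_mem (sub_mem (hrec n) (p.smul_mem _ hn₁)) (p.smul_mem _ hn₀)
  rcases le_or_gt 0 n with hn | hn
  · exact (up n hn).1
  · exact (down n (by omega)).1

end LaurentPolynomial

section Legendre

variable {K : Type*} [Field K]

def IsLegendreRecurrence (a : K) (c : ℤ → K) : Prop :=
  ∀ n : ℤ, ((n : K) + 1) * c (n + 1) - a * (2 * n + 1) * c n + n * c (n - 1) = 0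

theorem IsLegendreRecurrence.reflect {a : K} {c : ℤ → K} (hc : IsLegendreRecurrence a c) :
    IsLegendreRecurrence a fun n ↦ c (-1 - n) := by
  intro n
  have h := hc (-1 - n)
  dsimp only
  rw [show -1 - (n + 1) = -1 - n - 1 by ring, show -1 - (n - 1) = -1 - n + 1 by ring]
  push_cast at h
  linear_combination -h

noncomputable def legendreVal (a : K) : ℕ → K
  | 0 => 1
  | 1 => a
  | n + 2 => (a * (2 * n + 3) * legendreVal a (n + 1) - (n + 1) * legendreVal a n) / (n + 2)

-- Extending by zero keeps the recurrence: at `n = -1` and `n = 0` it does not link the two halves.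
noncomputable def legendreSeq (a : K) (n : ℤ) : K :=
  if 0 ≤ n then legendreVal a n.toNat else 0

theorem legendreSeq_neg_one (a : K) : legendreSeq a (-1) = 0 := if_neg (by omega)

theorem legendreSeq_zero (a : K) : legendreSeq a 0 = 1 := by simp [legendreSeq, legendreVal]

theorem legendreSeq_natCast (a : K) (n : ℕ) : legendreSeq a n = legendreVal a n := by
  simp [legendreSeq]

theorem isLegendreRecurrence_legendreSeq [CharZero K] (a : K) :
    IsLegendreRecurrence a (legendreSeq a) := by
  intro n
  rcases lt_trichotomy n 0 with hn | rfl | hn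
  · have hneg : ∀ m < 0, legendreSeq a m = 0 := fun m hm ↦ if_neg (by omega)
    rw [hneg n hn, hneg (n - 1) (by omega)]
    rcases eq_or_ne n (-1) with rfl | hne
    · push_cast; ring
    · rw [hneg (n + 1) (by omega)]; ring
  · simp [legendreSeq_zero, legendreSeq_neg_one, show legendreSeq a 1 = a by
      simp [legendreSeq, legendreVal]]
  · obtain ⟨m, rfl⟩ : ∃ m : ℕ, n = m + 1 := ⟨(n - 1).toNat, by omega⟩
    have hm : (m : K) + 2 ≠ 0 := by exact_mod_cast (show m + 2 ≠ 0 by omega)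
    rw [show (m : ℤ) + 1 + 1 = ((m + 2 : ℕ) : ℤ) by push_cast; ring, add_sub_cancel_right,
      show (m : ℤ) + 1 = ((m + 1 : ℕ) : ℤ) by push_cast; ring]
    simp only [legendreSeq_natCast, legendreVal]
    field_simp
    push_cast
    ring

end Legendre

open Submodule

section QuadCenter

variable (a : ℂ) (D : ℂ[T;T⁻¹] →ₗ[ℂ] ℂ[T;T⁻¹])

noncomputable def derivOdd : ℂ[T;T⁻¹] →ₗ[ℂ] ℂ[T;T⁻¹] :=
  LinearMap.mulLeft ℂ (T 2 - 2 * C a * T 1 + 1) ∘ₗ D + LinearMap.mulLeft ℂ (T 1 - C a)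

theorem Tquad_apply (f g : ℂ[T;T⁻¹]) : Tquad a D (f, g) = (derivOdd a D g, D f) := rfl

theorem derivOdd_T (hD : ∀ n : ℤ, D (T n) = (n : ℂ) • T (n - 1)) (n : ℤ) :
    derivOdd a D (T n) =
      ((n : ℂ) + 1) • T (n + 1) - (a * (2 * n + 1)) • T n + (n : ℂ) • T (n - 1) := by
  have h₂ : (T 2 : ℂ[T;T⁻¹]) = T 1 * T 1 := by rw [← T_add]; rfl
  have hsucc : (T (n + 1) : ℂ[T;T⁻¹]) = T 1 * T 1 * T (n - 1) := by
    rw [← T_add, ← T_add]; ring_nf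
  have hn : (T n : ℂ[T;T⁻¹]) = T 1 * T (n - 1) := by rw [← T_add]; ring_nf
  simp only [derivOdd, LinearMap.add_apply, LinearMap.comp_apply, LinearMap.mulLeft_apply, hD]
  rw [h₂, hsucc, hn]
  simp only [smul_eq_C_mul, map_add, map_mul, map_intCast, map_one, map_ofNat]
  ring

theorem coeffPairing_derivOdd_eq_zero (hD : ∀ n : ℤ, D (T n) = (n : ℂ) • T (n - 1)) {c : ℤ → ℂ}
    (hc : IsLegendreRecurrence a c) (g : ℂ[T;T⁻¹]) : coeffPairing c (derivOdd a D g) = 0 := by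
  have : coeffPairing c ∘ₗ derivOdd a D = 0 := linearMap_ext_T fun n ↦ by
    simpa [derivOdd_T a D hD, mul_assoc] using hc n
  exact LinearMap.congr_fun this g

theorem coeffPairing_single_neg_one_D_eq_zero (hD : ∀ n : ℤ, D (T n) = (n : ℂ) • T (n - 1))
    (f : ℂ[T;T⁻¹]) :
    coeffPairing (Pi.single (-1) 1) (D f) = 0 := by
  have : coeffPairing (Pi.single (-1) 1) ∘ₗ D = 0 := linearMap_ext_T fun n ↦ by
    rw [LinearMap.comp_apply, hD]
    rcases eq_or_ne n 0 with rfl | hn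
    · simp
    · simp [show n - 1 ≠ -1 by omega]
  exact LinearMap.congr_fun this f

noncomputable def quadFunctionals : ℂ[T;T⁻¹] × ℂ[T;T⁻¹] →ₗ[ℂ] Fin 3 → ℂ :=
  LinearMap.pi ![coeffPairing (Pi.single (-1) 1) ∘ₗ LinearMap.snd ℂ _ _,
    coeffPairing (fun n ↦ legendreSeq a (-1 - n)) ∘ₗ LinearMap.fst ℂ _ _,
    coeffPairing (legendreSeq a) ∘ₗ LinearMap.fst ℂ _ _]

noncomputable def quadGenerators : Fin 3 → ℂ[T;T⁻¹] × ℂ[T;T⁻¹] :=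
  ![(0, T (-1)), (T (-1), 0), (1, 0)]

theorem range_Tquad_le_ker (hD : ∀ n : ℤ, D (T n) = (n : ℂ) • T (n - 1)) :
    LinearMap.range (Tquad a D) ≤ LinearMap.ker (quadFunctionals a) := by
  rintro _ ⟨⟨f, g⟩, rfl⟩
  ext i
  fin_cases i
  · exact coeffPairing_single_neg_one_D_eq_zero D hD f
  · exact coeffPairing_derivOdd_eq_zero a D hD (isLegendreRecurrence_legendreSeq a).reflect g
  · exact coeffPairing_derivOdd_eq_zero a D hD (isLegendreRecurrence_legendreSeq a) g

theorem quadFunctionals_quadGenerators (i : Fin 3) :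
    quadFunctionals a (quadGenerators i) = Pi.single i 1 := by
  ext j
  fin_cases i <;> fin_cases j <;>
    simp [quadFunctionals, quadGenerators, coeffPairing_one, legendreSeq_zero, legendreSeq_neg_one]

theorem span_quadGenerators_sup_range_Tquad (hD : ∀ n : ℤ, D (T n) = (n : ℂ) • T (n - 1)) :
    span ℂ (Set.range quadGenerators) ⊔ LinearMap.range (Tquad a D) = ⊤ := by
  set S := span ℂ (Set.range quadGenerators) ⊔ LinearMap.range (Tquad a D)
  have hgen (i : Fin 3) : quadGenerators i ∈ S := mem_sup_left (subset_span ⟨i, rfl⟩)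
  have hrange (x) : Tquad a D x ∈ S := mem_sup_right ⟨x, rfl⟩
  have hfst : S.comap (LinearMap.inl ℂ _ _) = ⊤ := submodule_eq_top_of_T_mem <|
    T_mem_of_three_term (fun n ↦ a * (2 * n + 1)) (hgen 1) (by rw [T_zero]; exact hgen 2)
      fun n ↦ by simpa [Tquad_apply, derivOdd_T a D hD] using hrange (0, T n)
  have hsnd : S.comap (LinearMap.inr ℂ _ _) = ⊤ := submodule_eq_top_of_T_mem fun n ↦ by
    rcases eq_or_ne n (-1) with rfl | hn
    · exact hgen 0
    · have hn' : (n : ℂ) + 1 ≠ 0 := by exact_mod_cast (show n + 1 ≠ 0 by omega)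
      have h := hrange (((n : ℂ) + 1)⁻¹ • T (n + 1), 0)
      rwa [Tquad_apply, map_smul, hD, add_sub_cancel_right, smul_smul, Int.cast_add,
        Int.cast_one, inv_mul_cancel₀ hn', one_smul, map_zero] at h
  rw [eq_top_iff, ← LinearMap.sup_range_inl_inr, sup_le_iff, LinearMap.range_eq_map,
    LinearMap.range_eq_map, map_le_iff_le_comap, map_le_iff_le_comap, hfst, hsnd]
  exact ⟨le_rfl, le_rfl⟩

end QuadCenter

theorem quad_center_dim_three_general (a : ℂ)
    (D : LaurentPolynomial ℂ →ₗ[ℂ] LaurentPolynomial ℂ)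
    (hD : ∀ n : ℤ, D (T n) = (n : ℂ) • T (n - 1)) :
    Module.finrank ℂ
        ((LaurentPolynomial ℂ × LaurentPolynomial ℂ) ⧸ LinearMap.range (Tquad a D)) = 3 ∧
    ∃ b : Module.Basis (Fin 3) ℂ
        ((LaurentPolynomial ℂ × LaurentPolynomial ℂ) ⧸ LinearMap.range (Tquad a D)),
      b 0 = (LinearMap.range (Tquad a D)).mkQ (0, T (-1)) ∧
      b 1 = (LinearMap.range (Tquad a D)).mkQ (T (-1), 0) ∧
      b 2 = (LinearMap.range (Tquad a D)).mkQ (1, 0) := by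
  let b := (LinearMap.range (Tquad a D)).quotientBasisOfBiorthogonal quadGenerators
    (quadFunctionals a) (range_Tquad_le_ker a D hD) (quadFunctionals_quadGenerators a)
    (span_quadGenerators_sup_range_Tquad a D hD)
  have hb (i : Fin 3) : b i = (LinearMap.range (Tquad a D)).mkQ (quadGenerators i) :=
    quotientBasisOfBiorthogonal_apply ..
  exact ⟨by rw [Module.finrank_eq_card_basis b, Fintype.card_fin], b, hb 0, hb 1, hb 2⟩

/-- for `a ≠ ±1`, the quotient `V = (L × L)/range(T)` is 3-dimensional
over `ℂ`, with basis `ω₀ = [X⁻¹u]`, `ω₁ = [X⁻¹]`, `ω₂ = [1]`. -/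
theorem quad_center_dim_three (a : ℂ) (ha1 : a ≠ 1) (ha2 : a ≠ -1)
    (D : LaurentPolynomial ℂ →ₗ[ℂ] LaurentPolynomial ℂ)
    (hD : ∀ n : ℤ, D (T n) = (n : ℂ) • T (n - 1)) :
    Module.finrank ℂ
        ((LaurentPolynomial ℂ × LaurentPolynomial ℂ) ⧸ LinearMap.range (Tquad a D)) = 3 ∧
    ∃ b : Module.Basis (Fin 3) ℂ
        ((LaurentPolynomial ℂ × LaurentPolynomial ℂ) ⧸ LinearMap.range (Tquad a D)),
      b 0 = (LinearMap.range (Tquad a D)).mkQ (0, T (-1)) ∧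
      b 1 = (LinearMap.range (Tquad a D)).mkQ (T (-1), 0) ∧
      b 2 = (LinearMap.range (Tquad a D)).mkQ (1, 0) :=
  quad_center_dim_three_general a D hD
end

section
/- Let a ∈ ℂ. For every natural number k, the class of (X^k, 0) in V = (L × L)/range(T) equals (Q k).eval a times the class of (1, 0); that is, [x^k] = P_k(a)·ω₂ in A/∂A, where P_k is the k-th Legendre polynomial. -/
open LaurentPolynomial

/-!
Since `∂(x^(n+1) u) = (n+2) x^(n+2) - (2n+3) a x^(n+1) + (n+1) x^n`, the classes `[x^n]` satisfy
the three-term Legendre recurrence with `X = a`, and so do `P_n(a) [1]`. Both sequences start with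
`[1]` and `[x] = a [1]` (the case `n = -1` of the same identity), hence they agree.
-/

theorem eq_zero_of_two_step_recurrence {K M : Type*} [Field K] [AddCommGroup M] [Module K M]
    {u : ℕ → M} (c b d : ℕ → K) (hc : ∀ n, c n ≠ 0)
    (hrec : ∀ n, c n • u (n + 2) = b n • u (n + 1) + d n • u n)
    (h0 : u 0 = 0) (h1 : u 1 = 0) (n : ℕ) : u n = 0 := by
  induction n using Nat.twoStepInduction with
  | zero => exact h0
  | one => exact h1
  | more n ih0 ih1 =>
    have := hrec n
    rw [ih0, ih1, smul_zero, smul_zero, add_zero, smul_eq_zero] at this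
    exact this.resolve_left (hc n)

section

variable (a : ℂ) {D : LaurentPolynomial ℂ →ₗ[ℂ] LaurentPolynomial ℂ}

theorem Tquad_zero_T_add_one (hD : ∀ n : ℤ, D (T n) = (n : ℂ) • T (n - 1)) (n : ℤ) :
    Tquad a D (0, T (n + 1)) =
      (((n : ℂ) + 2) • T (n + 2) - ((2 * n + 3) * a) • T (n + 1) + ((n : ℂ) + 1) • T n, 0) := by
  have hT2 : (T (n + 2) : LaurentPolynomial ℂ) = T n * T 1 * T 1 := by
    rw [← T_add, ← T_add, add_assoc, one_add_one_eq_two]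
  have hT1 : (T (n + 1) : LaurentPolynomial ℂ) = T n * T 1 := T_add n 1
  have hT2' : (T 2 : LaurentPolynomial ℂ) = T 1 * T 1 := by rw [← T_add, one_add_one_eq_two]
  show ((T 2 - 2 * C a * T 1 + 1) * D (T (n + 1)) + (T 1 - C a) * T (n + 1), D 0) = _
  rw [hD, add_sub_cancel_right, map_zero]
  congr 1
  simp only [smul_eq_C_mul, hT2, hT1, hT2', map_add, map_mul, map_ofNat, map_one, map_intCast]
  push_cast
  ring

theorem mkQ_range_Tquad_T_add_two (hD : ∀ n : ℤ, D (T n) = (n : ℂ) • T (n - 1)) (n : ℤ) :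
    ((n : ℂ) + 2) • (LinearMap.range (Tquad a D)).mkQ (T (n + 2), 0) =
      ((2 * n + 3) * a) • (LinearMap.range (Tquad a D)).mkQ (T (n + 1), 0) -
        ((n : ℂ) + 1) • (LinearMap.range (Tquad a D)).mkQ (T n, 0) := by
  have hzero : ((LinearMap.range (Tquad a D)).mkQ ∘ₗ LinearMap.inl ℂ _ _)
      (((n : ℂ) + 2) • T (n + 2) - ((2 * n + 3) * a) • T (n + 1) + ((n : ℂ) + 1) • T n) = 0 :=
    (Submodule.Quotient.mk_eq_zero _).2 ⟨_, Tquad_zero_T_add_one a hD n⟩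
  simp only [map_add, map_sub, map_smul, LinearMap.comp_apply, LinearMap.inl_apply] at hzero
  linear_combination (norm := module) hzero

end

/-- Legendre reduction for positive powers: `[x^k] = P_k(a) * ω₂` in
`A/∂A`, where `Q` is the Legendre sequence given by the three-term recurrence. -/
theorem legendre_reduction_pos (a : ℂ)
    (D : LaurentPolynomial ℂ →ₗ[ℂ] LaurentPolynomial ℂ)
    (hD : ∀ n : ℤ, D (T n) = (n : ℂ) • T (n - 1))
    (Q : ℕ → Polynomial ℂ) (hQ0 : Q 0 = 1) (hQ1 : Q 1 = Polynomial.X)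
    (hQrec : ∀ n : ℕ, ((n : ℂ) + 2) • Q (n + 2) =
      (2 * (n : ℂ) + 3) • (Polynomial.X * Q (n + 1)) - ((n : ℂ) + 1) • Q n)
    (k : ℕ) :
    (LinearMap.range (Tquad a D)).mkQ (T (k : ℤ), 0) =
      (Q k).eval a • (LinearMap.range (Tquad a D)).mkQ (1, 0) := by
  set q := (LinearMap.range (Tquad a D)).mkQ
  have hQeval (n : ℕ) : ((n : ℂ) + 2) * (Q (n + 2)).eval a =
      (2 * n + 3) * a * (Q (n + 1)).eval a - ((n : ℂ) + 1) * (Q n).eval a := by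
    simpa [mul_assoc] using congrArg (Polynomial.eval a) (hQrec n)
  refine sub_eq_zero.1 <| eq_zero_of_two_step_recurrence
    (u := fun n => q (T n, 0) - (Q n).eval a • q (1, 0))
    (fun n => (n : ℂ) + 2) (fun n => (2 * n + 3) * a) (fun n => -((n : ℂ) + 1))
    (fun n => by norm_cast) (fun n => ?_) ?_ ?_ k
  · have := mkQ_range_Tquad_T_add_two a hD n
    push_cast
    linear_combination (norm := module) this - hQeval n • q (1, 0)
  · simp [hQ0]
  · have := mkQ_range_Tquad_T_add_two a hD (-1)
    norm_num at this
    simp [hQ1, q, this]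
end

section
/- Let a ∈ ℂ. For every natural number k ≥ 1, the class of (X^(−k), 0) in V = (L × L)/range(T) equals (Q (k−1)).eval a times the class of (X⁻¹, 0); that is, [x^(−k)] = P_{k−1}(a)·ω₁ in A/∂A, where P_{k−1} is the (k−1)-st Legendre polynomial. -/
/-!
Applying `∂` to `xⁿu` gives `(n+1)xⁿ⁺¹ - (2n+1)a xⁿ + n xⁿ⁻¹ ∈ ∂A`. Read at negative `n`,
this says that the classes `[x⁻ᵏ]` satisfy Bonnet's three-term recurrence for the Legendre
polynomials at `a`, with `[x⁻²] = a [x⁻¹]`; so `[x⁻ᵏ] = P_{k-1}(a) [x⁻¹]`.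
-/

open LaurentPolynomial

theorem Tquad_apply_zero_T (a : ℂ) {D : LaurentPolynomial ℂ →ₗ[ℂ] LaurentPolynomial ℂ}
    (hD : ∀ n : ℤ, D (T n) = (n : ℂ) • T (n - 1)) (n : ℤ) :
    Tquad a D (0, T n) =
      (((n : ℂ) + 1) • T (n + 1) - (a * (2 * n + 1)) • T n + (n : ℂ) • T (n - 1), 0) := by
  have h1 : (T n : LaurentPolynomial ℂ) = T (n - 1) * T 1 := by rw [← T_add]; ring_nf
  have h2 : (T (n + 1) : LaurentPolynomial ℂ) = T (n - 1) * T 1 * T 1 := by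
    rw [← T_add, ← T_add]; ring_nf
  have h3 : (T 2 : LaurentPolynomial ℂ) = T 1 * T 1 := by rw [← T_add]; rfl
  refine Prod.ext ?_ (map_zero D)
  simp only [Tquad, Tgen, LinearMap.coe_mk, AddHom.coe_mk, hD, smul_eq_C_mul]
  rw [h1, h2, h3]
  simp only [map_add, map_mul, map_ofNat, map_one]
  ring

theorem mkQ_Tquad_range_T_recurrence (a : ℂ)
    {D : LaurentPolynomial ℂ →ₗ[ℂ] LaurentPolynomial ℂ}
    (hD : ∀ n : ℤ, D (T n) = (n : ℂ) • T (n - 1)) (n : ℤ) :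
    ((n : ℂ) + 1) • (LinearMap.range (Tquad a D)).mkQ (T (n + 1), 0) +
        (n : ℂ) • (LinearMap.range (Tquad a D)).mkQ (T (n - 1), 0) =
      (a * (2 * n + 1)) • (LinearMap.range (Tquad a D)).mkQ (T n, 0) := by
  have hzero : (LinearMap.range (Tquad a D)).mkQ (Tquad a D (0, T n)) = 0 :=
    (Submodule.Quotient.mk_eq_zero _).mpr (LinearMap.mem_range_self _ _)
  rw [Tquad_apply_zero_T a hD] at hzero
  simp only [← map_smul, ← map_add, Prod.smul_mk, smul_zero]
  rw [← sub_eq_zero, ← map_sub]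
  convert hzero using 2
  refine Prod.ext ?_ (by simp)
  simp only [Prod.fst_add, Prod.fst_sub]
  abel

theorem eq_eval_smul_of_legendre_recurrence {K M : Type*} [Field K] [CharZero K]
    [AddCommGroup M] [Module K M]
    (Q : ℕ → Polynomial K) (hQ0 : Q 0 = 1) (hQ1 : Q 1 = Polynomial.X)
    (hQrec : ∀ n : ℕ, ((n : K) + 2) • Q (n + 2) =
      (2 * (n : K) + 3) • (Polynomial.X * Q (n + 1)) - ((n : K) + 1) • Q n)
    (a : K) (v : ℕ → M) (hv1 : v 1 = a • v 0)
    (hv : ∀ n : ℕ, ((n : K) + 2) • v (n + 2) =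
      (2 * (n : K) + 3) • a • v (n + 1) - ((n : K) + 1) • v n)
    (n : ℕ) : v n = (Q n).eval a • v 0 := by
  induction n using Nat.twoStepInduction with
  | zero => rw [hQ0, Polynomial.eval_one, one_smul]
  | one => rw [hv1, hQ1, Polynomial.eval_X]
  | more n ih₀ ih₁ =>
    have hQn := congrArg (Polynomial.eval a) (hQrec n)
    simp only [Polynomial.eval_smul, Polynomial.eval_sub, Polynomial.eval_mul,
      Polynomial.eval_X, smul_eq_mul] at hQn
    refine smul_right_injective M (r := (n : K) + 2) (by norm_cast) ?_
    simp only [hv, ih₀, ih₁, smul_smul, ← sub_smul]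
    rw [hQn]

/-- Legendre reduction for negative powers: `[x^(-k)] = P_(k-1)(a) * ω₁`
in `A/∂A` for `k ≥ 1`. -/
theorem legendre_reduction_neg (a : ℂ)
    (D : LaurentPolynomial ℂ →ₗ[ℂ] LaurentPolynomial ℂ)
    (hD : ∀ n : ℤ, D (T n) = (n : ℂ) • T (n - 1))
    (Q : ℕ → Polynomial ℂ) (hQ0 : Q 0 = 1) (hQ1 : Q 1 = Polynomial.X)
    (hQrec : ∀ n : ℕ, ((n : ℂ) + 2) • Q (n + 2) =
      (2 * (n : ℂ) + 3) • (Polynomial.X * Q (n + 1)) - ((n : ℂ) + 1) • Q n)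
    (k : ℕ) (hk : 1 ≤ k) :
    (LinearMap.range (Tquad a D)).mkQ (T (-(k : ℤ)), 0) =
      (Q (k - 1)).eval a • (LinearMap.range (Tquad a D)).mkQ (T (-1), 0) := by
  set π := (LinearMap.range (Tquad a D)).mkQ with hπ
  have hv1 : π (T (-((1 : ℕ) + 1 : ℤ)), 0) = a • π (T (-((0 : ℕ) + 1 : ℤ)), 0) := by
    have h := mkQ_Tquad_range_T_recurrence a hD (-1)
    rw [← hπ] at h
    norm_num at h ⊢
    exact h
  have hv : ∀ n : ℕ, ((n : ℂ) + 2) • π (T (-((n + 2 : ℕ) + 1 : ℤ)), 0) =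
      (2 * (n : ℂ) + 3) • a • π (T (-((n + 1 : ℕ) + 1 : ℤ)), 0) -
        ((n : ℂ) + 1) • π (T (-((n : ℕ) + 1 : ℤ)), 0) := by
    intro n
    have h := mkQ_Tquad_range_T_recurrence a hD (-((n : ℤ) + 2))
    rw [← hπ] at h
    push_cast at h ⊢
    ring_nf at h ⊢
    linear_combination (norm := module) -h
  obtain ⟨k, rfl⟩ := Nat.exists_eq_add_of_le' hk
  simpa using eq_eval_smul_of_legendre_recurrence Q hQ0 hQ1 hQrec a
    (fun n => π (T (-((n : ℤ) + 1)), 0)) hv1 hv k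
end

section
/- Let a ∈ ℝ and let F ∈ ℝ⟦Z⟧ be the formal power series whose k-th coefficient is (Q k).eval a. Then F satisfies the first-order differential equation (1 − 2aZ + Z²)·F′ + (Z − a)·F = 0 in ℝ⟦Z⟧, where F′ denotes the formal derivative of F. -/
/-!
Writing `F = ∑ pₙ Zⁿ`, the coefficient of `Zⁿ⁺¹` in `(1 - 2aZ + Z²) F' + (Z - a) F` is
`(n + 2) pₙ₊₂ - (2n + 3) a pₙ₊₁ + (n + 1) pₙ`, which vanishes by the three-term recurrence
evaluated at `a`, and the constant coefficient is `p₁ - a p₀ = 0`.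
-/

open PowerSeries

section
variable {R : Type*} [CommRing R]

/-- Isolates the constant coefficient: every term except `F' - aF` carries a factor `X`. -/
theorem legendreODE_eq_derivative_sub_add_X_mul (a : R) (F : R⟦X⟧) :
    (1 - C (2 * a) * X + X ^ 2) * d⁄dX R F + (X - C a) * F =
      d⁄dX R F - C a * F + X * (d⁄dX R (X * F) - C (2 * a) * d⁄dX R F) := by
  rw [Derivation.leibniz, derivative_X, smul_eq_mul, smul_eq_mul]
  ring

theorem legendreODE_mk_eq_zero (a : R) (p : ℕ → R) (h1 : p 1 = a * p 0)
    (hrec : ∀ n : ℕ, ((n : R) + 2) * p (n + 2) =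
      (2 * (n : R) + 3) * (a * p (n + 1)) - ((n : R) + 1) * p n) :
    (1 - C (2 * a) * X + X ^ 2) * d⁄dX R (mk p) + (X - C a) * mk p = 0 := by
  rw [legendreODE_eq_derivative_sub_add_X_mul]
  ext (_ | n) <;>
    simp only [map_add, map_sub, map_zero, coeff_zero_X_mul, coeff_succ_X_mul, coeff_C_mul,
      coeff_derivative, coeff_mk]
  · linear_combination h1
  · push_cast
    linear_combination hrec n

end

/-- the Legendre generating function `F = Σ P_k(a) Z^k` satisfies the
first-order ODE `(1 - 2aZ + Z^2) * F' + (Z - a) * F = 0` in `ℝ⟦Z⟧`. -/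
theorem legendre_genfun_ODE (a : ℝ)
    (Q : ℕ → Polynomial ℝ) (hQ0 : Q 0 = 1) (hQ1 : Q 1 = Polynomial.X)
    (hQrec : ∀ n : ℕ, ((n : ℝ) + 2) • Q (n + 2) =
      (2 * (n : ℝ) + 3) • (Polynomial.X * Q (n + 1)) - ((n : ℝ) + 1) • Q n) :
    (1 - PowerSeries.C (2 * a) * PowerSeries.X + PowerSeries.X ^ 2) *
        (PowerSeries.derivative ℝ (PowerSeries.mk fun k => (Q k).eval a)) +
      (PowerSeries.X - PowerSeries.C a) * (PowerSeries.mk fun k => (Q k).eval a) = 0 := by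
  apply legendreODE_mk_eq_zero
  · simp [hQ0, hQ1]
  · intro n
    simpa only [Polynomial.eval_sub, Polynomial.eval_smul, Polynomial.eval_mul,
      Polynomial.eval_X, smul_eq_mul] using congrArg (Polynomial.eval a) (hQrec n)
end

section
/- Let Q : ℕ → ℝ[X] be the Legendre polynomials. For every natural number n ≥ 3, the following identity holds in ℝ[X]: (2n+1) · ( n²·Q(n+1) − (4n² − 3n + 1)·X·Q(n) + ((2n² − 3n + 2) + 2(n−1)(2n−1)·X²)·Q(n−1) − (n−1)(4n−5)·X·Q(n−2) + (n−1)(n−2)·Q(n−3) ) = Q(n−1) − Q(n+1). (This is the key identity showing that the reduced cross-cocycle g_n equals the Legendre antiderivative (P_{n−1} − P_{n+1})/(2n+1).) -/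
/-!
Writing the Legendre recurrence as Bonnet's `(j + 1) Q_{j+1} = (2j + 1) X Q_j - j Q_{j-1}`,
the identity is a linear combination of its three instances at `j = n - 2, n - 1, n`, with
coefficients polynomial in `n` and `X`; so it is a ring identity, valid for any five consecutive
terms of a sequence obeying that recurrence.
-/

open Polynomial

theorem cross_cocycle_identity_of_bonnet {A : Type*} [CommRing A] (x k p₀ p₁ p₂ p₃ p₄ : A)
    (h₀ : (k - 1) * p₂ = (2 * k - 3) * x * p₁ - (k - 2) * p₀)
    (h₁ : k * p₃ = (2 * k - 1) * x * p₂ - (k - 1) * p₁)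
    (h₂ : (k + 1) * p₄ = (2 * k + 1) * x * p₃ - k * p₂) :
    (2 * k + 1) *
        (k ^ 2 * p₄ - (4 * k ^ 2 - 3 * k + 1) * x * p₃ +
          ((2 * k ^ 2 - 3 * k + 2) + 2 * (k - 1) * (2 * k - 1) * x ^ 2) * p₂ -
          (k - 1) * (4 * k - 5) * x * p₁ + (k - 1) * (k - 2) * p₀) =
      p₂ - p₄ := by
  linear_combination (2 * k ^ 2 - k + 1) * h₂ - 2 * (2 * k + 1) * (k - 1) * x * h₁
    + (2 * k + 1) * (k - 1) * h₀

theorem reduced_cross_cocycle_identity_general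
    (Q : ℕ → Polynomial ℝ)
    (hQrec : ∀ n : ℕ, ((n : ℝ) + 2) • Q (n + 2) =
      (2 * (n : ℝ) + 3) • (Polynomial.X * Q (n + 1)) - ((n : ℝ) + 1) • Q n)
    (n : ℕ) (hn : 3 ≤ n) :
    C (2 * (n : ℝ) + 1) *
        (C ((n : ℝ) ^ 2) * Q (n + 1) -
          C (4 * (n : ℝ) ^ 2 - 3 * (n : ℝ) + 1) * X * Q n +
          (C (2 * (n : ℝ) ^ 2 - 3 * (n : ℝ) + 2) +
            C (2 * ((n : ℝ) - 1) * (2 * (n : ℝ) - 1)) * X ^ 2) * Q (n - 1) -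
          C (((n : ℝ) - 1) * (4 * (n : ℝ) - 5)) * X * Q (n - 2) +
          C (((n : ℝ) - 1) * ((n : ℝ) - 2)) * Q (n - 3)) =
      Q (n - 1) - Q (n + 1) := by
  obtain ⟨m, rfl⟩ := Nat.exists_eq_add_of_le' hn
  have hrec (j : ℕ) : ((j : ℝ[X]) + 2) * Q (j + 2) =
      (2 * (j : ℝ[X]) + 3) * X * Q (j + 1) - ((j : ℝ[X]) + 1) * Q j := by
    simpa only [smul_eq_C_mul, map_add, map_mul, map_natCast, map_ofNat, map_one, mul_assoc]
      using hQrec j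
  have h₀ := hrec m
  have h₁ := hrec (m + 1)
  have h₂ := hrec (m + 2)
  push_cast at h₁ h₂
  simp only [show m + 3 - 1 = m + 2 by omega, show m + 3 - 2 = m + 1 by omega,
    Nat.add_sub_cancel, show m + 3 + 1 = m + 4 by omega]
  simp only [map_add, map_sub, map_mul, map_pow, map_ofNat, map_one, map_natCast, Nat.cast_add,
    Nat.cast_ofNat]
  linear_combination cross_cocycle_identity_of_bonnet X ((m : ℝ[X]) + 3) (Q m) (Q (m + 1))
    (Q (m + 2)) (Q (m + 3)) (Q (m + 4))
    (by linear_combination h₀) (by linear_combination h₁) (by linear_combination h₂)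

/-- the key identity `(2n+1) * g_n = Q_(n-1) - Q_(n+1)` in `ℝ[X]` for
the reduced cross-cocycle `g_n`, valid for `n ≥ 3`. -/
theorem reduced_cross_cocycle_identity
    (Q : ℕ → Polynomial ℝ) (hQ0 : Q 0 = 1) (hQ1 : Q 1 = Polynomial.X)
    (hQrec : ∀ n : ℕ, ((n : ℝ) + 2) • Q (n + 2) =
      (2 * (n : ℝ) + 3) • (Polynomial.X * Q (n + 1)) - ((n : ℝ) + 1) • Q n)
    (n : ℕ) (hn : 3 ≤ n) :
    C (2 * (n : ℝ) + 1) *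
        (C ((n : ℝ) ^ 2) * Q (n + 1) -
          C (4 * (n : ℝ) ^ 2 - 3 * (n : ℝ) + 1) * X * Q n +
          (C (2 * (n : ℝ) ^ 2 - 3 * (n : ℝ) + 2) +
            C (2 * ((n : ℝ) - 1) * (2 * (n : ℝ) - 1)) * X ^ 2) * Q (n - 1) -
          C (((n : ℝ) - 1) * (4 * (n : ℝ) - 5)) * X * Q (n - 2) +
          C (((n : ℝ) - 1) * ((n : ℝ) - 2)) * Q (n - 3)) =
      Q (n - 1) - Q (n + 1) :=
  reduced_cross_cocycle_identity_general Q hQrec n hn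
end

section
/- Let a ∈ ℂ. For every natural number s, setting n = s + 1, the class of (P·((s+1)²·X^s − a·s(2s+1)·X^(s−1) + s(s−1)·X^(s−2)), 0) in V = (L × L)/range(T) equals (((Q (n−1)).eval a − (Q (n+1)).eval a)/(2n+1)) times the class of (1, 0). That is, the cross-cocycle of the universal central extension of Der(A) satisfies ψ(e₁, f_s) = ((P_{n−1}(a) − P_{n+1}(a))/(2n+1))·ω₂ = (∫_a^1 P_n(t) dt)·ω₂. -/
/-!
Modulo the exact elements `∂(X^m u) = bonnetRel a m`, the classes `e k = [X^k]` satisfy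
`e 1 = a • e 0` and Bonnet's recurrence `(k+2) e (k+2) = (2k+3) a e (k+1) - (k+1) e k`,
so `e k = P_k(a) • [1]`. Multiplied by `2s+3`, the cocycle value differs from `X^s - X^(s+2)`
by a combination of the relators at `m = s+1, s, s-1`, which gives
`(2s+3) [ψ] = (P_s(a) - P_(s+2)(a)) • [1]`.
-/

open LaurentPolynomial

theorem LaurentPolynomial.T_eq_mul_T_one_pow {R : Type*} [Semiring R] {m n : ℤ} (k : ℕ)
    (h : n = m + k) : (T n : R[T;T⁻¹]) = T m * T 1 ^ k := by
  rw [T_pow, mul_one, ← T_add, h]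

theorem eq_eval_smul_of_bonnet_recurrence {M : Type*} [AddCommGroup M] [Module ℂ M] (a : ℂ)
    (Q : ℕ → Polynomial ℂ) (hQ0 : Q 0 = 1) (hQ1 : Q 1 = Polynomial.X)
    (hQrec : ∀ n : ℕ, ((n : ℂ) + 2) • Q (n + 2) =
      (2 * (n : ℂ) + 3) • (Polynomial.X * Q (n + 1)) - ((n : ℂ) + 1) • Q n)
    (e : ℕ → M) (he1 : e 1 = a • e 0)
    (hrec : ∀ n : ℕ, ((n : ℂ) + 2) • e (n + 2) =
      (a * (2 * n + 3)) • e (n + 1) - ((n : ℂ) + 1) • e n) (k : ℕ) :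
    e k = (Q k).eval a • e 0 := by
  induction k using Nat.twoStepInduction with
  | zero => simp [hQ0]
  | one => simp [hQ1, he1]
  | more n ih0 ih1 =>
    have hQa := congrArg (Polynomial.eval a) (hQrec n)
    simp only [Polynomial.eval_smul, Polynomial.eval_sub, Polynomial.eval_mul,
      Polynomial.eval_X, smul_eq_mul] at hQa
    have hn : ((n : ℂ) + 2) ≠ 0 := by norm_cast
    refine smul_right_injective M hn ?_
    dsimp only
    linear_combination (norm := module)
      hrec n + (a * (2 * n + 3)) • ih1 - ((n : ℂ) + 1) • ih0 - hQa • e 0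

noncomputable def bonnetRel (a : ℂ) (m : ℤ) : ℂ[T;T⁻¹] :=
  ((m : ℂ) + 1) • T (m + 1) - (a * (2 * m + 1)) • T m + (m : ℂ) • T (m - 1)

theorem Tquad_zero_T (a : ℂ) {D : ℂ[T;T⁻¹] →ₗ[ℂ] ℂ[T;T⁻¹]}
    (hD : ∀ n : ℤ, D (T n) = (n : ℂ) • T (n - 1)) (m : ℤ) :
    Tquad a D (0, T m) = (bonnetRel a m, 0) := by
  have h1 : (T m : ℂ[T;T⁻¹]) = T (m - 1) * T 1 ^ 1 := T_eq_mul_T_one_pow 1 (by omega)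
  have h2 : (T (m + 1) : ℂ[T;T⁻¹]) = T (m - 1) * T 1 ^ 2 := T_eq_mul_T_one_pow 2 (by omega)
  have h3 : (T 2 : ℂ[T;T⁻¹]) = T 0 * T 1 ^ 2 := T_eq_mul_T_one_pow 2 (by omega)
  simp only [Tquad, Tgen, LinearMap.coe_mk, AddHom.coe_mk, map_zero, Prod.mk.injEq, and_true]
  rw [hD, bonnetRel]
  simp only [smul_eq_C_mul, map_add, map_mul, map_one, map_ofNat, map_intCast]
  rw [h1, h2, h3, T_zero]
  ring

noncomputable def evenClass (a : ℂ) (D : ℂ[T;T⁻¹] →ₗ[ℂ] ℂ[T;T⁻¹]) :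
    ℂ[T;T⁻¹] →ₗ[ℂ] (ℂ[T;T⁻¹] × ℂ[T;T⁻¹]) ⧸ LinearMap.range (Tquad a D) :=
  (LinearMap.range (Tquad a D)).mkQ ∘ₗ LinearMap.inl ℂ _ _

theorem evenClass_bonnetRel (a : ℂ) {D : ℂ[T;T⁻¹] →ₗ[ℂ] ℂ[T;T⁻¹]}
    (hD : ∀ n : ℤ, D (T n) = (n : ℂ) • T (n - 1)) (m : ℤ) :
    evenClass a D (bonnetRel a m) = 0 :=
  (Submodule.Quotient.mk_eq_zero _).2 ⟨(0, T m), Tquad_zero_T a hD m⟩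

theorem evenClass_T_natCast (a : ℂ) {D : ℂ[T;T⁻¹] →ₗ[ℂ] ℂ[T;T⁻¹]}
    (hD : ∀ n : ℤ, D (T n) = (n : ℂ) • T (n - 1))
    (Q : ℕ → Polynomial ℂ) (hQ0 : Q 0 = 1) (hQ1 : Q 1 = Polynomial.X)
    (hQrec : ∀ n : ℕ, ((n : ℂ) + 2) • Q (n + 2) =
      (2 * (n : ℂ) + 3) • (Polynomial.X * Q (n + 1)) - ((n : ℂ) + 1) • Q n) (k : ℕ) :
    evenClass a D (T k) = (Q k).eval a • evenClass a D 1 := by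
  rw [← T_zero]
  refine eq_eval_smul_of_bonnet_recurrence a Q hQ0 hQ1 hQrec
    (fun k ↦ evenClass a D (T k)) ?_ ?_ k
  · simpa [bonnetRel, T_zero, sub_eq_zero] using evenClass_bonnetRel a hD 0
  · intro n
    have h := evenClass_bonnetRel a hD (n + 1)
    simp only [bonnetRel, map_add, map_sub, map_smul, add_sub_cancel_right, add_assoc,
      one_add_one_eq_two] at h
    push_cast
    linear_combination (norm := module) h

/- The coefficients of the three relators are forced by comparing the coefficients of
`X^(s+2)`, `X^(s+1)` and `X^(s-2)`. -/
theorem smul_cocycle_eq_add_bonnetRel (a : ℂ) (s : ℕ) :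
    (2 * (s : ℂ) + 3) • ((T 2 - 2 * C a * T 1 + 1) *
      (C (((s : ℂ) + 1) ^ 2) * T (s : ℤ) -
        C (a * (s : ℂ) * (2 * (s : ℂ) + 1)) * T ((s : ℤ) - 1) +
        C ((s : ℂ) * ((s : ℂ) - 1)) * T ((s : ℤ) - 2))) =
      T s - T (s + 2) + ((2 * (s : ℂ) ^ 2 + 3 * s + 2) • bonnetRel a (s + 1) -
        (2 * a * s * (2 * s + 3)) • bonnetRel a s +
        ((s : ℂ) * (2 * s + 3)) • bonnetRel a (s - 1)) := by
  have h4 : (T (s + 2) : ℂ[T;T⁻¹]) = T (s - 2) * T 1 ^ 4 := T_eq_mul_T_one_pow 4 (by omega)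
  have h3 : (T (s + 1) : ℂ[T;T⁻¹]) = T (s - 2) * T 1 ^ 3 := T_eq_mul_T_one_pow 3 (by omega)
  have h2 : (T s : ℂ[T;T⁻¹]) = T (s - 2) * T 1 ^ 2 := T_eq_mul_T_one_pow 2 (by omega)
  have h1 : (T (s - 1) : ℂ[T;T⁻¹]) = T (s - 2) * T 1 ^ 1 := T_eq_mul_T_one_pow 1 (by omega)
  have hP : (T 2 : ℂ[T;T⁻¹]) = T 0 * T 1 ^ 2 := T_eq_mul_T_one_pow 2 (by omega)
  simp only [bonnetRel, add_sub_cancel_right, sub_add_cancel, add_assoc, one_add_one_eq_two,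
    sub_sub]
  rw [h4, h3, h2, h1, hP, T_zero]
  simp only [smul_eq_C_mul, map_add, map_sub, map_mul, map_pow, map_one, map_ofNat,
    Int.cast_natCast, Int.cast_add, Int.cast_sub, Int.cast_one]
  ring

/-- the cross-cocycle `ψ(e₁, f_s) = [P * ∂²-part of x^s u]` equals the
Legendre antiderivative `(P_(n-1)(a) - P_(n+1)(a))/(2n+1)` times `ω₂`, where `n = s+1`. -/
theorem cross_cocycle_legendre_antiderivative (a : ℂ)
    (D : LaurentPolynomial ℂ →ₗ[ℂ] LaurentPolynomial ℂ)
    (hD : ∀ n : ℤ, D (T n) = (n : ℂ) • T (n - 1))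
    (Q : ℕ → Polynomial ℂ) (hQ0 : Q 0 = 1) (hQ1 : Q 1 = Polynomial.X)
    (hQrec : ∀ n : ℕ, ((n : ℂ) + 2) • Q (n + 2) =
      (2 * (n : ℂ) + 3) • (Polynomial.X * Q (n + 1)) - ((n : ℂ) + 1) • Q n)
    (s : ℕ) (n : ℕ) (hn : n = s + 1) :
    (LinearMap.range (Tquad a D)).mkQ
        ((T 2 - 2 * C a * T 1 + 1) *
          (C (((s : ℂ) + 1) ^ 2) * T (s : ℤ) -
            C (a * (s : ℂ) * (2 * (s : ℂ) + 1)) * T ((s : ℤ) - 1) +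
            C ((s : ℂ) * ((s : ℂ) - 1)) * T ((s : ℤ) - 2)), 0) =
      (((Q (n - 1)).eval a - (Q (n + 1)).eval a) / (2 * (n : ℂ) + 1)) •
        (LinearMap.range (Tquad a D)).mkQ (1, 0) := by
  subst hn
  have hclass := congrArg (evenClass a D) (smul_cocycle_eq_add_bonnetRel a s)
  simp only [map_add, map_sub, map_smul, evenClass_bonnetRel a hD, smul_zero, sub_zero,
    add_zero] at hclass
  rw [show ((s : ℤ) + 2) = ((s + 2 : ℕ) : ℤ) by push_cast; rfl,
    evenClass_T_natCast a hD Q hQ0 hQ1 hQrec, evenClass_T_natCast a hD Q hQ0 hQ1 hQrec,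
    ← sub_smul] at hclass
  have hs : (2 * (s : ℂ) + 3) ≠ 0 := by norm_cast
  rw [Nat.add_sub_cancel, show 2 * ((s + 1 : ℕ) : ℂ) + 1 = 2 * s + 3 by push_cast; ring,
    div_eq_inv_mul, mul_smul, eq_inv_smul_iff₀ hs]
  exact hclass
end

section
/- Let a ∈ ℂ. In V = (L × L)/range(T), the class of (P·(−a·X⁻² + 2·X⁻³), 0) equals the class of (X⁻¹, 0) minus a times the class of (1, 0). That is, the boundary cross-cocycle value satisfies ψ(e₁, f₋₁) = ω₁ − a·ω₂. -/
open LaurentPolynomial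

/-! The difference of the two sides is exact: it is `∂((2a x⁻¹ - x⁻²) u)`. -/

theorem Tgen_apply_zero_fst (p w : LaurentPolynomial ℂ)
    (D : LaurentPolynomial ℂ →ₗ[ℂ] LaurentPolynomial ℂ) (g : LaurentPolynomial ℂ) :
    Tgen p w D (0, g) = (p * D g + w * g, 0) :=
  Prod.ext rfl (map_zero D)

theorem Tquad_boundary_primitive (a : ℂ)
    (D : LaurentPolynomial ℂ →ₗ[ℂ] LaurentPolynomial ℂ)
    (hD : ∀ n : ℤ, D (T n) = (n : ℂ) • T (n - 1)) :
    Tquad a D (0, (2 * a) • T (-1) - T (-2)) =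
      ((T 2 - 2 * C a * T 1 + 1) * (-(C a) * T (-2) + 2 * T (-3)), 0) -
        ((T (-1), 0) - a • (1, 0)) := by
  have hDg : D ((2 * a) • T (-1) - T (-2)) = 2 * T (-3) - 2 * C a * T (-2) := by
    rw [map_sub, map_smul, hD, hD, smul_smul, smul_eq_C_mul, smul_eq_C_mul]
    norm_num [map_ofNat C 2]
    ring
  have hX : T 1 * T (-1) = (1 : LaurentPolynomial ℂ) := by rw [← T_add]; norm_num
  have hT2 : (T 2 : LaurentPolynomial ℂ) = T 1 ^ 2 := by rw [T_pow]; norm_num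
  have hT_2 : (T (-2) : LaurentPolynomial ℂ) = T (-1) ^ 2 := by rw [T_pow]; norm_num
  have hT_3 : (T (-3) : LaurentPolynomial ℂ) = T (-1) ^ 3 := by rw [T_pow]; norm_num
  rw [Tquad, Tgen_apply_zero_fst, hDg]
  refine Prod.ext ?_ (by simp)
  simp only [Prod.fst_sub, Prod.smul_fst, smul_eq_C_mul, mul_one, map_mul, map_ofNat C 2]
  rw [hT2, hT_2, hT_3]
  -- with `u = X * X⁻¹`, the difference of the two sides is `(u - 1) (-a (u - 1) + (2a² - 1) X⁻¹)`
  linear_combination (-(C a) * (T 1 * T (-1) - 1) + (2 * C a ^ 2 - 1) * T (-1)) * hX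

/-- the boundary cross-cocycle value
`ψ(e₁, f₋₁) = [P * (-aX⁻² + 2X⁻³)] = ω₁ - aω₂` in `V = (L × L)/range(T)`. -/
theorem cross_cocycle_boundary (a : ℂ)
    (D : LaurentPolynomial ℂ →ₗ[ℂ] LaurentPolynomial ℂ)
    (hD : ∀ n : ℤ, D (T n) = (n : ℂ) • T (n - 1)) :
    (LinearMap.range (Tquad a D)).mkQ
        ((T 2 - 2 * C a * T 1 + 1) * (-(C a) * T (-2) + 2 * T (-3)), 0) =
      (LinearMap.range (Tquad a D)).mkQ (T (-1), 0) -
        a • (LinearMap.range (Tquad a D)).mkQ (1, 0) := by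
  rw [← map_smul, ← map_sub, Submodule.mkQ_apply, Submodule.mkQ_apply, Submodule.Quotient.eq]
  exact ⟨_, Tquad_boundary_primitive a D hD⟩
end

section
/- Let Q : ℕ → ℝ[X] be the Legendre polynomials. For every natural number k, the interval integral of the (2k+1)-st Legendre polynomial over [0, 1] satisfies: ∫_0^1 (Q (2k+1)).eval t dt = (−1)^k · (2k choose k) / (2·(k+1)·4^k). -/
/-!
Differentiating the recurrence and inducting gives `Q'ₙ₊₁ - X Q'ₙ = (n+1) Qₙ` and
`X Q'ₙ₊₁ - Q'ₙ = (n+1) Qₙ₊₁`, whose sum is Bonnet's relation `Q'ₙ₊₂ - Q'ₙ = (2n+3) Qₙ₊₁`.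
Integrating it over `[0, 1]`, where `Qₙ(1) = 1`, gives
`(2n+3) ∫₀¹ Qₙ₊₁ = Qₙ(0) - Qₙ₊₂(0) = (2n+3)/(n+2) · Qₙ(0)` by the recurrence at `0`, and the same
recurrence gives `4ᵐ Q₂ₘ(0) = (-1)ᵐ C(2m, m)`.
-/

open Polynomial

structure IsLegendreSeq {K : Type*} [Field K] (Q : ℕ → K[X]) : Prop where
  zero : Q 0 = 1
  one : Q 1 = X
  rec_two : ∀ n : ℕ, ((n : K) + 2) • Q (n + 2) =
    (2 * (n : K) + 3) • (X * Q (n + 1)) - ((n : K) + 1) • Q n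

namespace IsLegendreSeq

variable {K : Type*} [Field K] {Q : ℕ → K[X]}

theorem rec_natCast (hQ : IsLegendreSeq Q) (n : ℕ) :
    ((n : K[X]) + 2) * Q (n + 2) =
      (2 * (n : K[X]) + 3) * (X * Q (n + 1)) - ((n : K[X]) + 1) * Q n := by
  simpa only [smul_eq_C_mul, map_add, map_mul, map_natCast, map_ofNat, map_one] using hQ.rec_two n

theorem derivative_rec (hQ : IsLegendreSeq Q) (n : ℕ) :
    ((n : K[X]) + 2) * derivative (Q (n + 2)) =
      (2 * (n : K[X]) + 3) * (Q (n + 1) + X * derivative (Q (n + 1))) -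
        ((n : K[X]) + 1) * derivative (Q n) := by
  have h := congrArg derivative (hQ.rec_natCast n)
  simp only [derivative_mul, derivative_sub, derivative_add, derivative_natCast, derivative_X,
    derivative_ofNat, derivative_one] at h
  linear_combination h

theorem eval_zero_add_two (hQ : IsLegendreSeq Q) (n : ℕ) :
    ((n : K) + 2) * (Q (n + 2)).eval 0 = -((n + 1) * (Q n).eval 0) := by
  have h := congrArg (eval 0) (hQ.rec_natCast n)
  simp only [eval_mul, eval_sub, eval_add, eval_X, eval_natCast, eval_ofNat,
    Polynomial.eval_one] at h
  linear_combination h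

variable [CharZero K]

theorem derivative_identities (hQ : IsLegendreSeq Q) (n : ℕ) :
    derivative (Q (n + 1)) - X * derivative (Q n) = ((n : K[X]) + 1) * Q n ∧
      X * derivative (Q (n + 1)) - derivative (Q n) = ((n : K[X]) + 1) * Q (n + 1) := by
  induction n with
  | zero => simp [hQ.zero, hQ.one]
  | succ n ih =>
    obtain ⟨h₁, h₂⟩ := ih
    have hn : ((n : K[X]) + 2) ≠ 0 := by exact_mod_cast (n + 2).succ_ne_zero
    push_cast
    refine ⟨mul_left_cancel₀ hn ?_, mul_left_cancel₀ hn ?_⟩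
    · linear_combination hQ.derivative_rec n + (n + 1) * h₂
    · linear_combination X * hQ.derivative_rec n - (n + 2) * hQ.rec_natCast n +
        (2 * n + 3) * X * h₂ - (n + 2) * h₁

theorem derivative_add_two_sub_derivative (hQ : IsLegendreSeq Q) (n : ℕ) :
    derivative (Q (n + 2)) - derivative (Q n) = (2 * (n : K[X]) + 3) * Q (n + 1) := by
  have h₁ := (hQ.derivative_identities (n + 1)).1
  have h₂ := (hQ.derivative_identities n).2
  push_cast at h₁
  linear_combination h₁ + h₂

theorem eval_one (hQ : IsLegendreSeq Q) (n : ℕ) : (Q n).eval 1 = 1 := by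
  induction n using Nat.twoStepInduction with
  | zero => simp [hQ.zero]
  | one => simp [hQ.one]
  | more n h₀ h₁ =>
    have h := congrArg (eval 1) (hQ.rec_natCast n)
    simp only [eval_mul, eval_sub, eval_add, eval_X, eval_natCast, eval_ofNat,
      Polynomial.eval_one, h₀, h₁] at h
    have hn : (n : K) + 2 ≠ 0 := by exact_mod_cast (n + 2).succ_ne_zero
    exact mul_left_cancel₀ hn (by linear_combination h)

theorem four_pow_mul_eval_zero_two_mul (hQ : IsLegendreSeq Q) (m : ℕ) :
    4 ^ m * (Q (2 * m)).eval 0 = (-1) ^ m * m.centralBinom := by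
  induction m with
  | zero => simp [hQ.zero]
  | succ m ih =>
    have h := hQ.eval_zero_add_two (2 * m)
    rw [show 2 * m + 2 = 2 * (m + 1) by ring] at h
    push_cast at h
    have hc : ((m : K) + 1) * (m + 1).centralBinom = 2 * (2 * m + 1) * m.centralBinom := by
      exact_mod_cast m.succ_mul_centralBinom_succ
    have hm : (m : K) + 1 ≠ 0 := by exact_mod_cast m.succ_ne_zero
    apply mul_left_cancel₀ hm
    linear_combination 2 * 4 ^ m * h - 2 * (2 * (m : K) + 1) * ih + (-1) ^ m * hc

end IsLegendreSeq

theorem Polynomial.integral_eval_derivative (p : ℝ[X]) (a b : ℝ) :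
    ∫ t in a..b, (derivative p).eval t = p.eval b - p.eval a :=
  intervalIntegral.integral_eq_sub_of_hasDerivAt (fun x _ => p.hasDerivAt x)
    (p.derivative.continuous.intervalIntegrable a b)

theorem IsLegendreSeq.integral_succ {Q : ℕ → ℝ[X]} (hQ : IsLegendreSeq Q) (n : ℕ) :
    ∫ t in (0 : ℝ)..1, (Q (n + 1)).eval t = (Q n).eval 0 / (n + 2) := by
  have hBonnet (t : ℝ) :
      (2 * (n : ℝ) + 3) * (Q (n + 1)).eval t = (derivative (Q (n + 2) - Q n)).eval t := by
    simpa using congrArg (eval t) (hQ.derivative_add_two_sub_derivative n).symm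
  have hI : (2 * (n : ℝ) + 3) * ∫ t in (0 : ℝ)..1, (Q (n + 1)).eval t =
      (Q n).eval 0 - (Q (n + 2)).eval 0 := by
    rw [← intervalIntegral.integral_const_mul]
    simp only [hBonnet, integral_eval_derivative, eval_sub, hQ.eval_one]
    ring
  have hn : (2 * (n : ℝ) + 3) ≠ 0 := by positivity
  rw [eq_div_iff (by positivity)]
  apply mul_left_cancel₀ hn
  linear_combination ((n : ℝ) + 2) * hI - hQ.eval_zero_add_two n

/-- `∫_0^1 P_(2k+1)(t) dt = (-1)^k * C(2k, k) / (2(k+1) 4^k)`. -/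
theorem legendre_odd_integral
    (Q : ℕ → Polynomial ℝ) (hQ0 : Q 0 = 1) (hQ1 : Q 1 = Polynomial.X)
    (hQrec : ∀ n : ℕ, ((n : ℝ) + 2) • Q (n + 2) =
      (2 * (n : ℝ) + 3) • (Polynomial.X * Q (n + 1)) - ((n : ℝ) + 1) • Q n)
    (k : ℕ) :
    ∫ t in (0 : ℝ)..1, (Q (2 * k + 1)).eval t =
      (-1) ^ k * (Nat.choose (2 * k) k : ℝ) / (2 * ((k : ℝ) + 1) * 4 ^ k) := by
  have hQ : IsLegendreSeq Q := ⟨hQ0, hQ1, hQrec⟩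
  rw [hQ.integral_succ, ← Nat.centralBinom_eq_two_mul_choose,
    ← hQ.four_pow_mul_eval_zero_two_mul]
  push_cast
  field_simp
end

section
/- Let a ∈ ℝ and let F ∈ ℝ⟦Z⟧ be the formal power series whose (2k+1)-st coefficient is (Q k).eval a for each natural number k and whose other coefficients vanish (i.e. F = Σ_{k≥0} P_k(a)·Z^(2k+1)). Then F satisfies the differential equation (Z − 2aZ³ + Z⁵)·F′ + (Z⁴ − 1)·F = 0 in ℝ⟦Z⟧, where F′ denotes the formal derivative. -/
/-!
Write `f n` for the `n`-th coefficient of `F`. Since `X * F'` has coefficients `n * f n`, the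
coefficient of `X ^ (n + 4)` in `(X - 2aX³ + X⁵) F' + (X⁴ - 1) F` is
`(n + 3) f (n + 4) - 2a (n + 2) f (n + 2) + (n + 1) f n`. For even `n` every term vanishes, and
for `n = 2k + 1` it is twice the three-term recurrence for `P_k(a)`; the coefficient of `X³` is
`2 (P₁(a) - a P₀(a)) = 0`, and the lower ones vanish because `F` is odd.
-/

namespace PowerSeries

variable {R : Type*} [CommRing R]

lemma coeff_X_mul_derivative (F : R⟦X⟧) (n : ℕ) :
    coeff n (X * d⁄dX R F) = n * coeff n F := by
  cases n with
  | zero => simp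
  | succ n => rw [coeff_succ_X_mul, coeff_derivative, mul_comm, Nat.cast_succ]

noncomputable def legendreOddOp (c : R) (F : R⟦X⟧) : R⟦X⟧ :=
  (X - C c * X ^ 3 + X ^ 5) * d⁄dX R F + (X ^ 4 - 1) * F

variable (c : R) (F : R⟦X⟧)

lemma legendreOddOp_eq :
    legendreOddOp c F = X * d⁄dX R F - C c * (X ^ 2 * (X * d⁄dX R F))
      + X ^ 4 * (X * d⁄dX R F) + X ^ 4 * F - F := by
  unfold legendreOddOp; ring

lemma coeff_zero_legendreOddOp : coeff 0 (legendreOddOp c F) = -coeff 0 F := by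
  simp only [legendreOddOp_eq, map_add, map_sub, coeff_C_mul, coeff_X_pow_mul',
    coeff_X_mul_derivative]
  norm_num

lemma coeff_one_legendreOddOp : coeff 1 (legendreOddOp c F) = 0 := by
  simp only [legendreOddOp_eq, map_add, map_sub, coeff_C_mul, coeff_X_pow_mul',
    coeff_X_mul_derivative]
  norm_num

lemma coeff_two_legendreOddOp : coeff 2 (legendreOddOp c F) = coeff 2 F := by
  simp only [legendreOddOp_eq, map_add, map_sub, coeff_C_mul, coeff_X_pow_mul',
    coeff_X_mul_derivative]
  norm_num
  ring

lemma coeff_three_legendreOddOp :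
    coeff 3 (legendreOddOp c F) = 2 * coeff 3 F - c * coeff 1 F := by
  simp only [legendreOddOp_eq, map_add, map_sub, coeff_C_mul, coeff_X_pow_mul',
    coeff_X_mul_derivative]
  norm_num
  ring

lemma coeff_add_four_legendreOddOp (n : ℕ) :
    coeff (n + 4) (legendreOddOp c F) = (n + 3) * coeff (n + 4) F
      - c * (n + 2) * coeff (n + 2) F + (n + 1) * coeff n F := by
  simp only [legendreOddOp_eq, map_add, map_sub, coeff_C_mul, coeff_X_pow_mul',
    coeff_X_mul_derivative, if_pos (show 2 ≤ n + 4 by omega), if_pos (show 4 ≤ n + 4 by omega),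
    show n + 4 - 2 = n + 2 by omega, Nat.add_sub_cancel]
  push_cast
  ring

end PowerSeries

open PowerSeries

/-- the quartic odd-sector generating function `F = Σ P_k(a) Z^(2k+1)`
satisfies `(Z - 2aZ³ + Z⁵) * F' + (Z⁴ - 1) * F = 0` in `ℝ⟦Z⟧`. -/
theorem quartic_genfun_ODE (a : ℝ)
    (Q : ℕ → Polynomial ℝ) (hQ0 : Q 0 = 1) (hQ1 : Q 1 = Polynomial.X)
    (hQrec : ∀ n : ℕ, ((n : ℝ) + 2) • Q (n + 2) =
      (2 * (n : ℝ) + 3) • (Polynomial.X * Q (n + 1)) - ((n : ℝ) + 1) • Q n)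
    (F : PowerSeries ℝ)
    (hFodd : ∀ k : ℕ, PowerSeries.coeff (2 * k + 1) F = (Q k).eval a)
    (hFeven : ∀ k : ℕ, PowerSeries.coeff (2 * k) F = 0) :
    (PowerSeries.X - PowerSeries.C (2 * a) * PowerSeries.X ^ 3 + PowerSeries.X ^ 5) *
        (PowerSeries.derivative ℝ F) +
      (PowerSeries.X ^ 4 - 1) * F = 0 := by
  have hrec (k : ℕ) : (k + 2) * (Q (k + 2)).eval a
      = (2 * k + 3) * a * (Q (k + 1)).eval a - (k + 1) * (Q k).eval a := by
    simpa [mul_assoc] using congrArg (Polynomial.eval a) (hQrec k)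
  change legendreOddOp (2 * a) F = 0
  ext n
  rw [map_zero]
  match n with
  | 0 => simpa [coeff_zero_legendreOddOp] using hFeven 0
  | 1 => exact coeff_one_legendreOddOp _ _
  | 2 => simpa [coeff_two_legendreOddOp] using hFeven 1
  | 3 => simp [coeff_three_legendreOddOp, hFodd 1, hFodd 0, hQ0, hQ1]
  | m + 4 =>
    rw [coeff_add_four_legendreOddOp]
    obtain ⟨k, rfl | rfl⟩ := Nat.even_or_odd' m
    · simp only [show 2 * k + 4 = 2 * (k + 2) by ring, show 2 * k + 2 = 2 * (k + 1) by ring,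
        hFeven, mul_zero, sub_zero, add_zero]
    · rw [show 2 * k + 1 + 4 = 2 * (k + 2) + 1 by ring,
        show 2 * k + 1 + 2 = 2 * (k + 1) + 1 by ring, hFodd, hFodd, hFodd]
      push_cast
      linear_combination 2 * hrec k
end
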